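/- Let (Ω, F, P) be a probability space, let F_0, …, F_{N−1} ∈ ℝ^{m×n} be deterministic matrices, let X_0, …, X_{N−1} : Ω → ℝ^{n×n} be measurable random matrices with E‖X_k‖⁴ < ∞ for all k and with X_k and X_l independent whenever k ≠ l, and let y_0, …, y_{N−1} : Ω → ℝ^n be measurable random vectors with E[ ( Σ_{k=0}^{N−1} ‖y_k‖² )² ] < ∞ (the pairs (X_k, y_k) may be dependent). Then E‖ Σ_{k=0}^{N−1} F_k X_k y_k ‖² ≤ ( Σ_{k=0}^{N−1} ‖F_k‖² √(E‖X_k‖⁴) ) · √( E[ ( Σ_{k=0}^{N−1} ‖y_k‖² )² ] ). -/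

import Mathlib

open MeasureTheory ProbabilityTheory Matrix

/-- Entrywise measurable-space structure on random matrices. -/
instance matrixMeasurableSpace {m n : ℕ} : MeasurableSpace (Matrix (Fin m) (Fin n) ℝ) :=
  MeasurableSpace.pi

/-- The Euclidean (ℓ²) norm on `ℝⁿ`. -/
noncomputable def euclNorm {n : ℕ} (v : Fin n → ℝ) : ℝ := Real.sqrt (∑ i, v i ^ 2)

/-- The spectral norm of a real matrix: the operator norm induced by the Euclidean norms. -/
noncomputable def specNorm {m n : ℕ} (A : Matrix (Fin m) (Fin n) ℝ) : ℝ :=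
  ‖LinearMap.toContinuousLinearMap (Matrix.toEuclideanLin A)‖

lemma euclNorm_eq_norm {n : ℕ} (v : Fin n → ℝ) :
    euclNorm v = ‖(WithLp.equiv 2 (Fin n → ℝ)).symm v‖ := by
  rw [EuclideanSpace.norm_eq]
  simp [euclNorm, sq_abs]

lemma euclNorm_nonneg {n : ℕ} (v : Fin n → ℝ) : 0 ≤ euclNorm v := Real.sqrt_nonneg _

lemma specNorm_nonneg {m n : ℕ} (A : Matrix (Fin m) (Fin n) ℝ) : 0 ≤ specNorm A := norm_nonneg _

lemma euclNorm_mulVec_le {m n : ℕ} (A : Matrix (Fin m) (Fin n) ℝ) (v : Fin n → ℝ) :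
    euclNorm (A.mulVec v) ≤ specNorm A * euclNorm v := by
  rw [euclNorm_eq_norm, euclNorm_eq_norm, WithLp.equiv_symm_apply, WithLp.equiv_symm_apply,
    ← Matrix.toEuclideanLin_apply_piLp_toLp]
  exact (LinearMap.toContinuousLinearMap (Matrix.toEuclideanLin A)).le_opNorm _

lemma euclNorm_sum_le {n N : ℕ} (v : Fin N → Fin n → ℝ) :
    euclNorm (∑ k, v k) ≤ ∑ k, euclNorm (v k) := by
  simp_rw [euclNorm_eq_norm]
  have : (WithLp.equiv 2 (Fin n → ℝ)).symm (∑ k, v k)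
      = ∑ k, (WithLp.equiv 2 (Fin n → ℝ)).symm (v k) := WithLp.toLp_sum _ _ _ _
  rw [this]
  exact norm_sum_le _ _

lemma euclNorm_mul_mulVec_le {m n : ℕ} (A : Matrix (Fin m) (Fin n) ℝ)
    (B : Matrix (Fin n) (Fin n) ℝ) (v : Fin n → ℝ) :
    euclNorm ((A * B).mulVec v) ≤ specNorm A * specNorm B * euclNorm v := by
  rw [← Matrix.mulVec_mulVec]
  calc euclNorm (A.mulVec (B.mulVec v)) ≤ specNorm A * euclNorm (B.mulVec v) :=
        euclNorm_mulVec_le _ _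
    _ ≤ specNorm A * (specNorm B * euclNorm v) :=
        mul_le_mul_of_nonneg_left (euclNorm_mulVec_le _ _) (norm_nonneg _)
    _ = specNorm A * specNorm B * euclNorm v := by ring

lemma cs_integral {Ω : Type*} [MeasurableSpace Ω] {P : Measure Ω}
    {f g : Ω → ℝ} (hf0 : ∀ ω, 0 ≤ f ω) (hg0 : ∀ ω, 0 ≤ g ω)
    (hf : MemLp f 2 P) (hg : MemLp g 2 P) :
    ∫ ω, f ω * g ω ∂P ≤ Real.sqrt (∫ ω, f ω ^ 2 ∂P) * Real.sqrt (∫ ω, g ω ^ 2 ∂P) := by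
  have hconj : Real.HolderConjugate 2 2 := Real.HolderConjugate.two_two
  have h2 : (ENNReal.ofReal (2:ℝ)) = 2 := by norm_num
  have hpow : ∀ x : ℝ, x ^ (2:ℝ) = x ^ 2 := fun x => by
    rw [show (2:ℝ) = ((2:ℕ):ℝ) by norm_num, Real.rpow_natCast]
  have := MeasureTheory.integral_mul_le_Lp_mul_Lq_of_nonneg hconj
    (Filter.Eventually.of_forall hf0) (Filter.Eventually.of_forall hg0)
    (h2 ▸ hf) (h2 ▸ hg)
  simp_rw [hpow, ← Real.sqrt_eq_rpow] at this
  exact this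

lemma memLp2_of_int_sq {Ω : Type*} [MeasurableSpace Ω] {P : Measure Ω}
    {f : Ω → ℝ} (hm : AEStronglyMeasurable f P)
    (h : Integrable (fun ω => f ω ^ 2) P) : MemLp f 2 P :=
  (memLp_two_iff_integrable_sq hm).2 (by simpa [Pi.pow_def] using h)

lemma int_mul_of_memLp2 {Ω : Type*} [MeasurableSpace Ω] {P : Measure Ω}
    {f g : Ω → ℝ} (hf : MemLp f 2 P) (hg : MemLp g 2 P) :
    Integrable (fun ω => f ω * g ω) P := by
  have : MemLp (f • g) 1 P :=
    hg.smul hf (hpqr := ⟨by rw [inv_one, ENNReal.inv_two_add_inv_two]⟩)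
  exact memLp_one_iff_integrable.1 (by simpa [Pi.smul_def, smul_eq_mul] using this : MemLp (f * g) 1 P)

/-- If the `Xₖ` are mutually independent with finite fourth norm-moments
(and the pairs `(Xₖ, yₖ)` may be dependent), then
`E‖Σₖ Fₖ Xₖ yₖ‖² ≤ (Σₖ ‖Fₖ‖² √(E‖Xₖ‖⁴)) ⬝ √(E[(Σₖ ‖yₖ‖²)²])`. -/
theorem second_moment_sum_le_of_indep_increments
    {m n N : ℕ} {Ω : Type*} [MeasurableSpace Ω] (P : Measure Ω) [IsProbabilityMeasure P]
    (F : Fin N → Matrix (Fin m) (Fin n) ℝ)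
    (X : Fin N → Ω → Matrix (Fin n) (Fin n) ℝ) (y : Fin N → Ω → Fin n → ℝ)
    (hXmeas : ∀ k, Measurable (X k)) (hymeas : ∀ k, Measurable (y k))
    (hX4 : ∀ k, Integrable (fun ω => specNorm (X k ω) ^ 4) P)
    (hXindep : ∀ k l, k ≠ l → IndepFun (X k) (X l) P)
    (hy : Integrable (fun ω => (∑ k, euclNorm (y k ω) ^ 2) ^ 2) P) :
    ∫ ω, euclNorm (∑ k, (F k * X k ω).mulVec (y k ω)) ^ 2 ∂P
      ≤ (∑ k, specNorm (F k) ^ 2 * Real.sqrt (∫ ω, specNorm (X k ω) ^ 4 ∂P))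
          * Real.sqrt (∫ ω, (∑ k, euclNorm (y k ω) ^ 2) ^ 2 ∂P) := by
  classical
  set a : Fin N → ℝ := fun k => specNorm (F k) with ha
  set b : Fin N → Ω → ℝ := fun k ω => specNorm (X k ω) with hb
  set c : Fin N → Ω → ℝ := fun k ω => euclNorm (y k ω) with hc
  set f : Fin N → Ω → ℝ := fun k ω => a k ^ 2 * b k ω ^ 2 with hf
  set g : Ω → ℝ := fun ω => ∑ k, c k ω ^ 2 with hg
  -- AE strong measurability of b k ^ 2
  have hbm : ∀ k, AEStronglyMeasurable (fun ω => b k ω ^ 2) P := by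
    intro k
    have h4 : AEStronglyMeasurable (fun ω => b k ω ^ 4) P := (hX4 k).aestronglyMeasurable
    have : (fun ω => b k ω ^ 2) = fun ω => Real.sqrt (b k ω ^ 4) := by
      funext ω
      rw [show (4:ℕ) = 2 * 2 from rfl, pow_mul, Real.sqrt_sq (sq_nonneg _)]
    rw [this]
    exact Real.continuous_sqrt.comp_aestronglyMeasurable h4
  -- MemLp facts
  have hfk2 : ∀ k, MemLp (fun ω => b k ω ^ 2) 2 P := by
    intro k
    refine memLp2_of_int_sq (hbm k) ?_
    have : (fun ω => (b k ω ^ 2) ^ 2) = fun ω => b k ω ^ 4 := by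
      funext ω; ring
    rw [this]; exact hX4 k
  have hfkLp : ∀ k, MemLp (f k) 2 P := fun k => (hfk2 k).const_mul _
  have hfLp : MemLp (fun ω => ∑ k, f k ω) 2 P := by
    have := memLp_finsetSum' (μ := P) (p := 2) Finset.univ (fun k (_ : k ∈ Finset.univ) => hfkLp k)
    have heq : (fun ω => ∑ k, f k ω) = ∑ k, f k := by
      funext ω; simp [Finset.sum_apply]
    rw [heq]; exact this
  have hcm : ∀ k, Measurable (fun ω => c k ω) := by
    intro k
    have : Continuous (fun v : Fin n → ℝ => euclNorm v) := by
      unfold euclNorm; fun_prop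
    exact (this.measurable).comp (hymeas k)
  have hgm : AEStronglyMeasurable g P := by
    apply Measurable.aestronglyMeasurable
    exact Finset.measurable_sum _ (fun k _ => ((hcm k).pow_const 2))
  have hgLp : MemLp g 2 P := memLp2_of_int_sq hgm hy
  -- nonnegativity
  have hb0 : ∀ k ω, 0 ≤ b k ω := fun k ω => specNorm_nonneg _
  have hc0 : ∀ k ω, 0 ≤ c k ω := fun k ω => euclNorm_nonneg _
  have hf0 : ∀ ω, 0 ≤ ∑ k, f k ω :=
    fun ω => Finset.sum_nonneg fun k _ => mul_nonneg (sq_nonneg _) (sq_nonneg _)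
  have hg0 : ∀ ω, 0 ≤ g ω := fun ω => Finset.sum_nonneg fun k _ => sq_nonneg _
  -- pointwise bound
  have hpt : ∀ ω, euclNorm (∑ k, (F k * X k ω).mulVec (y k ω)) ^ 2 ≤ (∑ k, f k ω) * g ω := by
    intro ω
    have h1 : euclNorm (∑ k, (F k * X k ω).mulVec (y k ω)) ≤ ∑ k, a k * b k ω * c k ω := by
      refine (euclNorm_sum_le _).trans (Finset.sum_le_sum fun k _ => ?_)
      exact euclNorm_mul_mulVec_le _ _ _
    have h1' : euclNorm (∑ k, (F k * X k ω).mulVec (y k ω)) ^ 2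
        ≤ (∑ k, a k * b k ω * c k ω) ^ 2 := by
      apply pow_le_pow_left₀ (euclNorm_nonneg _) h1
    refine h1'.trans ?_
    have := Finset.sum_mul_sq_le_sq_mul_sq Finset.univ
      (fun k => a k * b k ω) (fun k => c k ω)
    calc (∑ k, a k * b k ω * c k ω) ^ 2 ≤ (∑ k, (a k * b k ω) ^ 2) * ∑ k, c k ω ^ 2 := this
      _ = (∑ k, f k ω) * g ω := by simp_rw [hf, mul_pow, hg]
  -- Step C: integral of LHS ≤ ∫ f g
  have hfg_int : Integrable (fun ω => (∑ k, f k ω) * g ω) P := int_mul_of_memLp2 hfLp hgLp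
  have hstepC : ∫ ω, euclNorm (∑ k, (F k * X k ω).mulVec (y k ω)) ^ 2 ∂P
      ≤ ∫ ω, (∑ k, f k ω) * g ω ∂P :=
    integral_mono_of_nonneg (Filter.Eventually.of_forall fun ω => sq_nonneg _)
      hfg_int (Filter.Eventually.of_forall hpt)
  -- Step D: ∫ f g ≤ √∫f² √∫g²
  have hstepD : ∫ ω, (∑ k, f k ω) * g ω ∂P
      ≤ Real.sqrt (∫ ω, (∑ k, f k ω) ^ 2 ∂P) * Real.sqrt (∫ ω, g ω ^ 2 ∂P) :=
    cs_integral hf0 hg0 hfLp hgLp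
  -- Step E: √∫(Σf)² ≤ Σ a²√∫b⁴
  have hSk : ∀ k, Real.sqrt (∫ ω, f k ω ^ 2 ∂P)
      = a k ^ 2 * Real.sqrt (∫ ω, b k ω ^ 4 ∂P) := by
    intro k
    have : (fun ω => f k ω ^ 2) = fun ω => (a k ^ 2) ^ 2 * b k ω ^ 4 := by
      funext ω; simp only [hf]; ring
    rw [this, integral_const_mul, Real.sqrt_mul (sq_nonneg _), Real.sqrt_sq (sq_nonneg _)]
  have hstepE : Real.sqrt (∫ ω, (∑ k, f k ω) ^ 2 ∂P)
      ≤ ∑ k, a k ^ 2 * Real.sqrt (∫ ω, b k ω ^ 4 ∂P) := by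
    have hexp : ∫ ω, (∑ k, f k ω) ^ 2 ∂P
        = ∑ k, ∑ l, ∫ ω, f k ω * f l ω ∂P := by
      have h1 : (fun ω => (∑ k, f k ω) ^ 2) = fun ω => ∑ k, ∑ l, f k ω * f l ω := by
        funext ω
        rw [sq, Finset.sum_mul_sum]
      rw [h1]
      rw [integral_finset_sum _ (fun k _ => integrable_finset_sum _
        (fun l _ => int_mul_of_memLp2 (hfkLp k) (hfkLp l)))]
      exact Finset.sum_congr rfl fun k _ =>
        integral_finset_sum _ (fun l _ => int_mul_of_memLp2 (hfkLp k) (hfkLp l))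
    have hcs : ∀ k l, ∫ ω, f k ω * f l ω ∂P
        ≤ Real.sqrt (∫ ω, f k ω ^ 2 ∂P) * Real.sqrt (∫ ω, f l ω ^ 2 ∂P) := fun k l =>
      cs_integral (fun ω => mul_nonneg (sq_nonneg _) (sq_nonneg _))
        (fun ω => mul_nonneg (sq_nonneg _) (sq_nonneg _)) (hfkLp k) (hfkLp l)
    have hle : ∫ ω, (∑ k, f k ω) ^ 2 ∂P
        ≤ (∑ k, Real.sqrt (∫ ω, f k ω ^ 2 ∂P)) ^ 2 := by
      rw [hexp, sq, Finset.sum_mul_sum]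
      exact Finset.sum_le_sum fun k _ => Finset.sum_le_sum fun l _ => hcs k l
    calc Real.sqrt (∫ ω, (∑ k, f k ω) ^ 2 ∂P)
        ≤ Real.sqrt ((∑ k, Real.sqrt (∫ ω, f k ω ^ 2 ∂P)) ^ 2) := Real.sqrt_le_sqrt hle
      _ = ∑ k, Real.sqrt (∫ ω, f k ω ^ 2 ∂P) :=
          Real.sqrt_sq (Finset.sum_nonneg fun k _ => Real.sqrt_nonneg _)
      _ = ∑ k, a k ^ 2 * Real.sqrt (∫ ω, b k ω ^ 4 ∂P) :=
          Finset.sum_congr rfl fun k _ => hSk k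
  -- combine
  calc ∫ ω, euclNorm (∑ k, (F k * X k ω).mulVec (y k ω)) ^ 2 ∂P
      ≤ ∫ ω, (∑ k, f k ω) * g ω ∂P := hstepC
    _ ≤ Real.sqrt (∫ ω, (∑ k, f k ω) ^ 2 ∂P) * Real.sqrt (∫ ω, g ω ^ 2 ∂P) := hstepD
    _ ≤ (∑ k, a k ^ 2 * Real.sqrt (∫ ω, b k ω ^ 4 ∂P)) * Real.sqrt (∫ ω, g ω ^ 2 ∂P) :=
        mul_le_mul_of_nonneg_right hstepE (Real.sqrt_nonneg _)
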